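/- Let D be any divisor on H. Then: (i) for every f : V(G) → ℤ, the divisor D + div_ℓ(f;D) is G-admissible; (ii) every G-admissible divisor D′ on H that is linearly equivalent to D equals D + div_ℓ(f;D) for some f : V(G) → ℤ. -/
import Mathlib


open Finset
open scoped Classical

structure Multigraph (V E : Type) where
  tail : E → V
  head : E → V
  loopless : ∀ e, tail e ≠ head e

namespace Multigraph

variable {V E : Type}

/-- The simple graph of adjacency underlying a multigraph. -/
def adjG (G : Multigraph V E) : SimpleGraph V :=
  SimpleGraph.fromRel (fun u v => ∃ e, G.tail e = u ∧ G.head e = v)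

/-- A multigraph is connected if its adjacency graph is. -/
def Conn (G : Multigraph V E) : Prop := G.adjG.Connected

end Multigraph

variable {V E : Type} [Fintype V] [Fintype E] [DecidableEq V] [DecidableEq E]

/-- The vertex set of the subdivision `H` of `G`: the vertices of `G` together with,
for each edge `e`, the `ℓ e − 1` interior vertices `x_1^e, …, x_{ℓ_e − 1}^e` of the
subdivision of `e` (the pair `⟨e, j⟩` encodes `x_{j+1}^e`, indexed along the reference
orientation of `e`). -/
abbrev VH (V E : Type) (ℓ : E → ℕ) := V ⊕ (Σ e : E, Fin (ℓ e - 1))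

/-- The vertex `x_j^e` of `H` (along the reference orientation of `e`),
for `0 ≤ j ≤ ℓ e`. -/
def xv (G : Multigraph V E) (ℓ : E → ℕ) (e : E) (j : ℕ) : VH V E ℓ :=
  if h : j = 0 then Sum.inl (G.tail e)
  else if h2 : j < ℓ e then Sum.inr ⟨e, ⟨j - 1, by omega⟩⟩
  else Sum.inl (G.head e)

/-- The principal divisor `div(F)` on `H` of a function `F : V(H) → ℤ`; its value at a
vertex `w` is `ord_w(F) = Σ (F(u) − F(w))`, the sum being over the edges of `H` between
`u` and `w`. The edges of `H` are the pairs `{x_j^e, x_{j+1}^e}` for `0 ≤ j < ℓ e`. -/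
def divH (G : Multigraph V E) (ℓ : E → ℕ) (F : VH V E ℓ → ℤ) (w : VH V E ℓ) : ℤ :=
  ∑ e : E, ∑ j ∈ Finset.range (ℓ e),
    ((if xv G ℓ e j = w then F (xv G ℓ e (j + 1)) - F (xv G ℓ e j) else 0) +
     (if xv G ℓ e (j + 1) = w then F (xv G ℓ e j) - F (xv G ℓ e (j + 1)) else 0))

/-- A divisor `D` on `H` is `G`-admissible if, for every edge `e` of `G`, `D` vanishes
at all interior vertices of the subdivision of `e`, except at most one where it
takes the value `1`. -/
def GAdm (G : Multigraph V E) (ℓ : E → ℕ) (D : VH V E ℓ → ℤ) : Prop :=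
  ∀ e : E,
    (∀ j : Fin (ℓ e - 1), D (Sum.inr ⟨e, j⟩) = 0) ∨
    (∃ j : Fin (ℓ e - 1), D (Sum.inr ⟨e, j⟩) = 1 ∧
      ∀ j' : Fin (ℓ e - 1), j' ≠ j → D (Sum.inr ⟨e, j'⟩) = 0)

/-- `F : V(H) → ℤ` is the canonical extension of `f : V(G) → ℤ` with respect to the
divisor `D` on `H`: it extends `f` and `D + div(F)` is `G`-admissible. -/
def IsCanExt (G : Multigraph V E) (ℓ : E → ℕ) (D : VH V E ℓ → ℤ) (f : V → ℤ)
    (F : VH V E ℓ → ℤ) : Prop :=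
  (∀ v : V, F (Sum.inl v) = f v) ∧ GAdm G ℓ (fun w => D w + divH G ℓ F w)

section ArithAux

lemma sum_identity (h : ℕ → ℤ) (n : ℕ) :
    (n : ℤ) * (h 1 - h 0) +
      ∑ t ∈ Finset.range n, ((n : ℤ) - (t + 1)) * (h (t+2) - 2 * h (t+1) + h t)
      = h n - h 0 := by
  induction n with
  | zero => simp
  | succ n ih =>
    have tel1 : ∑ t ∈ Finset.range n, (h (t+2) - h (t+1)) = h (n+1) - h 1 := by
      simpa using Finset.sum_range_sub (fun t => h (t+1)) n
    have tel2 : ∑ t ∈ Finset.range n, (h (t+1) - h t) = h n - h 0 :=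
      Finset.sum_range_sub h n
    have split : ∑ t ∈ Finset.range (n+1), (((n+1:ℕ):ℤ) - (t + 1)) * (h (t+2) - 2 * h (t+1) + h t)
        = (∑ t ∈ Finset.range n, (((n : ℤ) - (t + 1)) * (h (t+2) - 2 * h (t+1) + h t)
            + ((h (t+2) - h (t+1)) - (h (t+1) - h t)))) := by
      rw [Finset.sum_range_succ]
      push_cast
      rw [show ((n:ℤ) + 1 - ((n:ℤ) + 1)) * (h (n + 2) - 2 * h (n + 1) + h n) = 0 from by ring,
        add_zero]
      exact Finset.sum_congr rfl (fun t _ => by ring)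
    rw [split, Finset.sum_add_distrib, Finset.sum_sub_distrib, tel1, tel2]; push_cast; linarith [ih]

def AdmSeq (n : ℕ) (a : ℕ → ℤ) : Prop :=
  (∀ i, 1 ≤ i → i < n → a i = 0) ∨
  (∃ p, 1 ≤ p ∧ p < n ∧ a p = 1 ∧ ∀ i, 1 ≤ i → i < n → i ≠ p → a i = 0)

lemma Sval {n : ℕ} {a : ℕ → ℤ} (ha : AdmSeq n a) :
    (∀ i, 1 ≤ i → i < n → a i = 0) ∧
      ∑ t ∈ Finset.range n, ((n : ℤ) - (t + 1)) * a (t+1) = 0 ∨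
    ∃ p, 1 ≤ p ∧ p < n ∧
      (∑ t ∈ Finset.range n, ((n : ℤ) - (t + 1)) * a (t+1) = (n : ℤ) - p) ∧
      a p = 1 ∧ (∀ i, 1 ≤ i → i < n → i ≠ p → a i = 0) := by
  rcases ha with h | ⟨p, hp1, hpn, hap, h0⟩
  · left
    refine ⟨h, Finset.sum_eq_zero (fun t ht => ?_)⟩
    simp only [Finset.mem_range] at ht
    rcases eq_or_lt_of_le (Nat.succ_le_of_lt ht) with he | hlt
    · rw [show ((n:ℤ) - ((t:ℤ)+1)) = 0 from by push_cast; omega]; ring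
    · rw [h (t+1) (by omega) (by omega)]; ring
  · right
    refine ⟨p, hp1, hpn, ?_, hap, h0⟩
    rw [Finset.sum_eq_single_of_mem (p-1) (Finset.mem_range.2 (by omega))]
    · rw [show p - 1 + 1 = p from by omega, hap, mul_one]
      push_cast [Nat.cast_sub hp1]; ring
    · intro t ht hne
      simp only [Finset.mem_range] at ht
      rcases eq_or_lt_of_le (Nat.succ_le_of_lt ht) with he | hlt
      · rw [show ((n:ℤ) - ((t:ℤ)+1)) = 0 from by push_cast; omega]; ring
      · rw [h0 (t+1) (by omega) (by omega) (by omega)]; ring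

lemma intmul_zero {n x c : ℤ} (hn : 0 < n) (h : n * x = c) (hlb : -n < c) (hub : c < n) :
    x = 0 ∧ c = 0 := by
  have hx : x = 0 := by
    by_contra hx
    rcases lt_or_gt_of_ne hx with hneg | hpos
    · have h1 : x ≤ -1 := by omega
      have h2 : n * x ≤ n * (-1) := mul_le_mul_of_nonneg_left h1 hn.le
      nlinarith
    · have h1 : 1 ≤ x := by omega
      have h2 : n * 1 ≤ n * x := mul_le_mul_of_nonneg_left h1 hn.le
      nlinarith
  exact ⟨hx, by rw [hx, mul_zero] at h; omega⟩

lemma seq_unique (n : ℕ) (g₁ g₂ a₁ a₂ : ℕ → ℤ)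
    (h0 : g₁ 0 = g₂ 0) (hn : g₁ n = g₂ n)
    (hr : ∀ i, 1 ≤ i → i < n →
      (g₁ (i+1) - 2*g₁ i + g₁ (i-1)) - (g₂ (i+1) - 2*g₂ i + g₂ (i-1)) = a₁ i - a₂ i)
    (hA1 : AdmSeq n a₁) (hA2 : AdmSeq n a₂) :
    ∀ i ≤ n, g₁ i = g₂ i := by
  rcases Nat.eq_zero_or_pos n with rfl | hn0
  · intro i hi
    have : i = 0 := by omega
    subst this; exact h0
  set h : ℕ → ℤ := fun i => g₁ i - g₂ i with hh
  have hh0 : h 0 = 0 := by simp [hh, h0]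
  have hhn : h n = 0 := by simp [hh, hn]
  have key := sum_identity h n
  have hsum : ∑ t ∈ Finset.range n, ((n : ℤ) - (t + 1)) * (h (t+2) - 2 * h (t+1) + h t)
      = (∑ t ∈ Finset.range n, ((n : ℤ) - (t + 1)) * a₁ (t+1))
        - (∑ t ∈ Finset.range n, ((n : ℤ) - (t + 1)) * a₂ (t+1)) := by
    rw [← Finset.sum_sub_distrib]
    refine Finset.sum_congr rfl (fun t ht => ?_)
    simp only [Finset.mem_range] at ht
    rcases eq_or_lt_of_le (Nat.succ_le_of_lt ht) with he | hlt
    · rw [show ((n:ℤ) - ((t:ℤ)+1)) = 0 from by push_cast; omega]; ring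
    · have e := hr (t+1) (by omega) (by omega)
      simp only [Nat.add_sub_cancel] at e
      have hx : h (t+2) - 2 * h (t+1) + h t = a₁ (t+1) - a₂ (t+1) := by
        show (g₁ (t+2) - g₂ (t+2)) - 2 * (g₁ (t+1) - g₂ (t+1)) + (g₁ t - g₂ t)
          = a₁ (t+1) - a₂ (t+1)
        linarith
      rw [hx]; ring
  rw [hsum, hh0, hhn] at key
  -- establish: h 1 = 0 and a₁ i = a₂ i on (0,n)
  have main : h 1 = 0 ∧ ∀ i, 1 ≤ i → i < n → a₁ i = a₂ i := by
    have hnz : (0:ℤ) < n := by exact_mod_cast hn0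
    rcases Sval hA1 with ⟨z1, S1⟩ | ⟨p, hp1, hpn, S1, hap, hz1⟩ <;>
      rcases Sval hA2 with ⟨z2, S2⟩ | ⟨q, hq1, hqn, S2, haq, hz2⟩ <;>
      rw [S1, S2] at key
    · have h1 : h 1 = 0 ∧ (0:ℤ) = 0 :=
        intmul_zero hnz (show (n:ℤ) * h 1 = 0 from by linarith) (by omega) (by omega)
      exact ⟨h1.1, fun i hi1 hi2 => by rw [z1 i hi1 hi2, z2 i hi1 hi2]⟩
    · exfalso
      have h1 : h 1 = 0 ∧ (n:ℤ) - q = 0 :=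
        intmul_zero hnz (show (n:ℤ) * h 1 = (n:ℤ) - q from by linarith)
          (by push_cast; omega) (by push_cast; omega)
      have := h1.2
      have hq : (q:ℤ) < n := by exact_mod_cast hqn
      omega
    · exfalso
      have h1 : h 1 = 0 ∧ (p:ℤ) - n = 0 :=
        intmul_zero hnz (show (n:ℤ) * h 1 = (p:ℤ) - n from by linarith)
          (by push_cast; omega) (by push_cast; omega)
      have := h1.2
      have hp : (p:ℤ) < n := by exact_mod_cast hpn
      omega
    · have h1 : h 1 = 0 ∧ (p:ℤ) - q = 0 :=
        intmul_zero hnz (show (n:ℤ) * h 1 = (p:ℤ) - q from by linarith)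
          (by push_cast; omega) (by push_cast; omega)
      have hpq : p = q := by
        have := h1.2
        omega
      subst hpq
      refine ⟨h1.1, fun i hi1 hi2 => ?_⟩
      rcases eq_or_ne i p with rfl | hne
      · rw [hap, haq]
      · rw [hz1 i hi1 hi2 hne, hz2 i hi1 hi2 hne]
  -- now conclude by strong induction
  have hrec : ∀ i, 1 ≤ i → i < n → h (i+1) - 2 * h i + h (i-1) = 0 := by
    intro i h1 h2
    have e1 := hr i h1 h2
    have e2 := main.2 i h1 h2
    show (g₁ (i+1) - g₂ (i+1)) - 2 * (g₁ i - g₂ i) + (g₁ (i-1) - g₂ (i-1)) = 0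
    linarith
  have hzero : ∀ i, i ≤ n → h i = 0 := by
    intro i
    induction i using Nat.strong_induction_on with
    | _ i ih =>
      intro hi
      match i, hi with
      | 0, _ => exact hh0
      | 1, h1n => exact main.1
      | (k+2), hk =>
        have e := hrec (k+1) (by omega) (by omega)
        have e1 := ih (k+1) (by omega) (by omega)
        have e2 := ih k (by omega) (by omega)
        simp only [Nat.add_sub_cancel] at e
        linarith
  intro i hi
  have hz : g₁ i - g₂ i = 0 := hzero i hi
  linarith

end ArithAux

section XV
variable (G : Multigraph V E) (ℓ : E → ℕ)

lemma xv_zero (e : E) : xv G ℓ e 0 = Sum.inl (G.tail e) := by simp [xv]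

lemma xv_last (e : E) (he : 0 < ℓ e) : xv G ℓ e (ℓ e) = Sum.inl (G.head e) := by
  simp only [xv]
  split_ifs with h1 h2
  · omega
  · omega
  · rfl

lemma xv_ne_inr {e' e : E} (hne : e' ≠ e) (j' : ℕ) (j : Fin (ℓ e - 1)) :
    xv G ℓ e' j' ≠ Sum.inr ⟨e, j⟩ := by
  simp only [xv]
  split_ifs <;> simp [hne]

lemma xv_eq_inr_iff {e : E} {j' : ℕ} (hj' : j' ≤ ℓ e) (j : Fin (ℓ e - 1)) :
    xv G ℓ e j' = Sum.inr ⟨e, j⟩ ↔ j' = (j : ℕ) + 1 := by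
  have hjv : (j : ℕ) < ℓ e - 1 := j.isLt
  simp only [xv]
  split_ifs with h1 h2
  · simp; omega
  · simp only [Sum.inr.injEq, Sigma.mk.inj_iff, heq_eq_eq, true_and]
    constructor
    · intro h; have := Fin.val_eq_val .. |>.mpr h; simp at this; omega
    · intro h; subst h; ext; simp
  · simp; omega


lemma divH_inr (hℓ : ∀ e, 0 < ℓ e) (F : VH V E ℓ → ℤ) (e : E) (j : Fin (ℓ e - 1)) :
    divH G ℓ F (Sum.inr ⟨e, j⟩) =
      F (xv G ℓ e (j : ℕ)) + F (xv G ℓ e ((j : ℕ) + 2)) - 2 * F (xv G ℓ e ((j : ℕ) + 1)) := by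
  have hjv : (j : ℕ) < ℓ e - 1 := j.isLt
  have hpos : 0 < ℓ e := hℓ e
  rw [divH]
  rw [Finset.sum_eq_single_of_mem e (Finset.mem_univ e)]
  · rw [Finset.sum_add_distrib]
    have hs1 : ∑ j' ∈ Finset.range (ℓ e),
        (if xv G ℓ e j' = Sum.inr ⟨e, j⟩ then F (xv G ℓ e (j' + 1)) - F (xv G ℓ e j') else 0)
        = F (xv G ℓ e ((j : ℕ) + 2)) - F (xv G ℓ e ((j : ℕ) + 1)) := by
      rw [Finset.sum_eq_single_of_mem ((j : ℕ) + 1) (Finset.mem_range.2 (by omega))]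
      · rw [if_pos ((xv_eq_inr_iff G ℓ (by omega) j).2 rfl)]
      · intro t ht hne
        rw [if_neg]
        intro hcon
        exact hne ((xv_eq_inr_iff G ℓ (le_of_lt (Finset.mem_range.1 ht)) j).1 hcon)
    have hs2 : ∑ j' ∈ Finset.range (ℓ e),
        (if xv G ℓ e (j' + 1) = Sum.inr ⟨e, j⟩ then F (xv G ℓ e j') - F (xv G ℓ e (j' + 1)) else 0)
        = F (xv G ℓ e (j : ℕ)) - F (xv G ℓ e ((j : ℕ) + 1)) := by
      rw [Finset.sum_eq_single_of_mem (j : ℕ) (Finset.mem_range.2 (by omega))]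
      · rw [if_pos ((xv_eq_inr_iff G ℓ (by omega) j).2 rfl)]
      · intro t ht hne
        rw [if_neg]
        intro hcon
        have := (xv_eq_inr_iff G ℓ (Nat.succ_le_of_lt (Finset.mem_range.1 ht)) j).1 hcon
        omega
    rw [hs1, hs2]; ring
  · intro e' _ hne
    refine Finset.sum_eq_zero (fun t ht => ?_)
    rw [if_neg (xv_ne_inr G ℓ hne t j), if_neg (xv_ne_inr G ℓ hne (t+1) j)]
    simp

lemma divH_congr (F F' : VH V E ℓ → ℤ)
    (hFF' : ∀ e j, j ≤ ℓ e → F (xv G ℓ e j) = F' (xv G ℓ e j)) (w : VH V E ℓ) :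
    divH G ℓ F w = divH G ℓ F' w := by
  unfold divH
  refine Finset.sum_congr rfl (fun e _ => Finset.sum_congr rfl (fun t ht => ?_))
  have ht' : t < ℓ e := Finset.mem_range.1 ht
  rw [hFF' e t (by omega), hFF' e (t+1) (by omega)]

lemma adm_to_seq (hℓ : ∀ e, 0 < ℓ e) (D' : VH V E ℓ → ℤ) (hD' : GAdm G ℓ D') (e : E) :
    AdmSeq (ℓ e) (fun i => D' (xv G ℓ e i)) := by
  rcases hD' e with hz | ⟨j, hj1, hj0⟩
  · left
    intro i hi1 hi2
    have hfin : i - 1 < ℓ e - 1 := by omega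
    have hx : xv G ℓ e i = Sum.inr ⟨e, ⟨i - 1, hfin⟩⟩ :=
      (xv_eq_inr_iff G ℓ (by omega) ⟨i - 1, hfin⟩).2 (by simp; omega)
    simp only [hx]
    exact hz _
  · right
    have hjv : (j : ℕ) < ℓ e - 1 := j.isLt
    refine ⟨(j : ℕ) + 1, by omega, by omega, ?_, ?_⟩
    · have hx : xv G ℓ e ((j : ℕ) + 1) = Sum.inr ⟨e, j⟩ :=
        (xv_eq_inr_iff G ℓ (by omega) j).2 rfl
      simp only [hx]
      exact hj1
    · intro i hi1 hi2 hne
      have hfin : i - 1 < ℓ e - 1 := by omega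
      have hx : xv G ℓ e i = Sum.inr ⟨e, ⟨i - 1, hfin⟩⟩ :=
        (xv_eq_inr_iff G ℓ (by omega) ⟨i - 1, hfin⟩).2 (by simp; omega)
      simp only [hx]
      refine hj0 ⟨i - 1, hfin⟩ (fun hcon => hne ?_)
      have : i - 1 = (j : ℕ) := by
        have := Fin.val_eq_val (⟨i - 1, hfin⟩ : Fin (ℓ e - 1)) j |>.2 hcon
        simpa using this
      omega

lemma canExt_unique (hℓ : ∀ e, 0 < ℓ e) (D F₁ F₂ : VH V E ℓ → ℤ)
    (hV : ∀ v, F₁ (Sum.inl v) = F₂ (Sum.inl v))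
    (h₁ : GAdm G ℓ (fun w => D w + divH G ℓ F₁ w))
    (h₂ : GAdm G ℓ (fun w => D w + divH G ℓ F₂ w)) :
    ∀ e j, j ≤ ℓ e → F₁ (xv G ℓ e j) = F₂ (xv G ℓ e j) := by
  intro e
  refine seq_unique (ℓ e) (fun i => F₁ (xv G ℓ e i)) (fun i => F₂ (xv G ℓ e i))
    (fun i => D (xv G ℓ e i) + divH G ℓ F₁ (xv G ℓ e i))
    (fun i => D (xv G ℓ e i) + divH G ℓ F₂ (xv G ℓ e i))
    ?_ ?_ ?_ (adm_to_seq G ℓ hℓ _ h₁ e) (adm_to_seq G ℓ hℓ _ h₂ e)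
  · simp only [xv_zero]; exact hV _
  · show F₁ (xv G ℓ e (ℓ e)) = F₂ (xv G ℓ e (ℓ e))
    rw [xv_last G ℓ e (hℓ e)]; exact hV _
  · intro i hi1 hi2
    have hfin : i - 1 < ℓ e - 1 := by omega
    have hx : xv G ℓ e i = Sum.inr ⟨e, ⟨i - 1, hfin⟩⟩ :=
      (xv_eq_inr_iff G ℓ (by omega) ⟨i - 1, hfin⟩).2 (by simp; omega)
    simp only [hx, divH_inr G ℓ hℓ F₁ e ⟨i - 1, hfin⟩, divH_inr G ℓ hℓ F₂ e ⟨i - 1, hfin⟩]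
    simp only [show i - 1 + 2 = i + 1 from by omega, show i - 1 + 1 = i from by omega, ← hx]
    ring

end XV

/-- let `canExt D f` denote the canonical extension of `f` with respect
to `D`, so that `div_ℓ(f; D) = div(canExt D f)`. Then, for every divisor `D` on `H`:
(i) for every `f : V(G) → ℤ`, the divisor `D + div_ℓ(f; D)` is `G`-admissible;
(ii) every `G`-admissible divisor `D'` on `H` linearly equivalent to `D` equals
`D + div_ℓ(f; D)` for some `f : V(G) → ℤ`. -/
theorem stmt2 (G : Multigraph V E) (hG : G.Conn) (ℓ : E → ℕ) (hℓ : ∀ e, 0 < ℓ e)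
    (canExt : (VH V E ℓ → ℤ) → (V → ℤ) → (VH V E ℓ → ℤ))
    (hcan : ∀ (D : VH V E ℓ → ℤ) (f : V → ℤ), IsCanExt G ℓ D f (canExt D f))
    (D : VH V E ℓ → ℤ) :
    (∀ f : V → ℤ, GAdm G ℓ (fun w => D w + divH G ℓ (canExt D f) w)) ∧
    (∀ D' : VH V E ℓ → ℤ, GAdm G ℓ D' →
      (∃ F : VH V E ℓ → ℤ, ∀ w, D' w = D w + divH G ℓ F w) →
      ∃ f : V → ℤ, ∀ w, D' w = D w + divH G ℓ (canExt D f) w) := by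

  constructor
  · intro f; exact (hcan D f).2
  · rintro D' hD' ⟨F, hF⟩
    set f : V → ℤ := fun v => F (Sum.inl v) with hf
    obtain ⟨hext, hadm⟩ := hcan D f
    have hadmF : GAdm G ℓ (fun w => D w + divH G ℓ F w) := by
      have heq : (fun w => D w + divH G ℓ F w) = D' := funext (fun w => (hF w).symm)
      rw [heq]; exact hD'
    have huniq := canExt_unique G ℓ hℓ D F (canExt D f)
      (fun v => (hext v).symm) hadmF hadm
    refine ⟨f, fun w => ?_⟩
    rw [hF w, divH_congr G ℓ F (canExt D f) huniq w]
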